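/- For every i ∈ {κ+1, …, n−1}, one has bar-α_i = α_i/α_{k(i)} and bar-α_i > α_i. -/

import Mathlib

open Finset

/-- `rhoProd ρ k j = ∏_{i=k+1}^{j} ρ i`. -/
noncomputable def rhoProd (ρ : ℕ → ℝ) (k j : ℕ) : ℝ := ∏ i ∈ Finset.Icc (k + 1) j, ρ i

/-- `k` is a binding index: `k ∈ {κ+1, …, n-1}` and `ρ_{k,j} < 1` for all `j ∈ {k+1, …, n-1}`. -/
def Binding (ρ : ℕ → ℝ) (n κ k : ℕ) : Prop :=
  κ + 1 ≤ k ∧ k ≤ n - 1 ∧ ∀ j, k + 1 ≤ j → j ≤ n - 1 → rhoProd ρ k j < 1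

/-- `kmin ρ n κ i = min {k ∈ H : k ≥ i}`, the smallest binding index `≥ i`. -/
noncomputable def kmin (ρ : ℕ → ℝ) (n κ i : ℕ) : ℕ :=
  sInf {k | Binding ρ n κ k ∧ i ≤ k}

/-- `bar-α_i`: equals `α i` for `i ≤ κ` and `(ρ_{i, k(i)})⁻¹` for `i > κ`. -/
noncomputable def barAlpha (ρ α : ℕ → ℝ) (n κ i : ℕ) : ℝ :=
  if i ≤ κ then α i else (rhoProd ρ i (kmin ρ n κ i))⁻¹

/-! Past the last index `κ` at which `α` is capped at `1`, the recursion never caps again, so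
`α_j = ρ_{κ,j}` for `κ ≤ j ≤ n-1`. Splitting `ρ_{κ,k} = ρ_{κ,i} ρ_{i,k}` gives `α_k = α_i ρ_{i,k}` for
`k = k(i)`, which is `bar-α_i = α_i / α_k`; and `α_k < 1` turns this into `α_i < bar-α_i`. -/

section RhoProd

variable (ρ : ℕ → ℝ)

@[simp]
lemma rhoProd_self (k : ℕ) : rhoProd ρ k k = 1 := by
  simp [rhoProd]

lemma rhoProd_succ {k j : ℕ} (hkj : k ≤ j) : rhoProd ρ k (j + 1) = rhoProd ρ k j * ρ (j + 1) :=
  prod_Icc_succ_top (by omega) ρ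

lemma rhoProd_mul_rhoProd {a b c : ℕ} (hab : a ≤ b) (hbc : b ≤ c) :
    rhoProd ρ a b * rhoProd ρ b c = rhoProd ρ a c := by
  simp only [rhoProd, Finset.Icc_add_one_left_eq_Ioc]
  exact prod_Ioc_consecutive ρ hab hbc

variable {ρ}

lemma rhoProd_pos {k j : ℕ} (hρ : ∀ i, k + 1 ≤ i → i ≤ j → 0 < ρ i) : 0 < rhoProd ρ k j :=
  prod_pos fun i hi ↦ hρ i (mem_Icc.1 hi).1 (mem_Icc.1 hi).2

end RhoProd

lemma eq_rhoProd_of_lt_one {ρ α : ℕ → ℝ} {κ N : ℕ} (hκ : α κ = 1)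
    (hrec : ∀ m, κ < m → m ≤ N → α m = min (α (m - 1) * ρ m) 1)
    (hlt : ∀ m, κ < m → m ≤ N → α m < 1) :
    ∀ j, κ ≤ j → j ≤ N → α j = rhoProd ρ κ j := by
  intro j hκj
  induction j, hκj using Nat.le_induction with
  | base => simp [hκ]
  | succ m hκm ih =>
    intro hmN
    have hcap := hrec (m + 1) (by omega) hmN
    rw [Nat.add_sub_cancel] at hcap
    have huncapped : α m * ρ (m + 1) < 1 := by
      have := hlt (m + 1) (by omega) hmN
      rw [hcap, min_lt_iff] at this
      exact this.resolve_right (lt_irrefl 1)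
    rw [hcap, min_eq_left huncapped.le, ih (by omega), rhoProd_succ ρ hκm]

lemma kmin_spec {ρ : ℕ → ℝ} {n κ i : ℕ} (hκi : κ + 1 ≤ i) (hin : i ≤ n - 1) :
    Binding ρ n κ (kmin ρ n κ i) ∧ i ≤ kmin ρ n κ i :=
  Nat.sInf_mem (s := {k | Binding ρ n κ k ∧ i ≤ k})
    ⟨n - 1, ⟨by omega, le_rfl, fun j hj hjn ↦ by omega⟩, hin⟩

lemma barAlpha_of_lt {ρ α : ℕ → ℝ} {n κ i : ℕ} (hκi : κ < i) :
    barAlpha ρ α n κ i = (rhoProd ρ i (kmin ρ n κ i))⁻¹ :=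
  if_neg (by omega)

theorem stmt7_general (n : ℕ) (ρ α : ℕ → ℝ)
    (hρ : ∀ i, 1 ≤ i → i ≤ n → 0 < ρ i)
    (hrec : ∀ k, 1 ≤ k → k ≤ n → α k = min (α (k - 1) * ρ k) 1)
    (κ : ℕ) (hκ1 : α κ = 1)
    (hκmax : ∀ k, k ≤ n - 1 → α k = 1 → k ≤ κ) :
    ∀ i, κ + 1 ≤ i → i ≤ n - 1 →
      barAlpha ρ α n κ i = α i / α (kmin ρ n κ i) ∧ α i < barAlpha ρ α n κ i := by
  have hlt : ∀ m, κ < m → m ≤ n - 1 → α m < 1 := fun m hκm hmn ↦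
    lt_of_le_of_ne (hrec m (by omega) (by omega) ▸ min_le_right _ _)
      fun h ↦ absurd (hκmax m hmn h) (by omega)
  have hα := eq_rhoProd_of_lt_one hκ1 (fun m _ hm ↦ hrec m (by omega) (by omega)) hlt
  intro i hκi hin
  rw [barAlpha_of_lt hκi]
  obtain ⟨⟨-, hkn, -⟩, hik⟩ := kmin_spec (ρ := ρ) hκi hin
  set k := kmin ρ n κ i
  have hαi_pos : 0 < α i :=
    hα i (by omega) hin ▸ rhoProd_pos fun m _ hm ↦ hρ m (by omega) (by omega)
  have hαk : α k = α i * rhoProd ρ i k := by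
    rw [hα k (by omega) hkn, hα i (by omega) hin, rhoProd_mul_rhoProd ρ (by omega) hik]
  have hρik_pos : 0 < rhoProd ρ i k := rhoProd_pos fun m _ hm ↦ hρ m (by omega) (by omega)
  refine ⟨by rw [hαk]; field_simp, ?_⟩
  rw [← one_div, lt_div_iff₀ hρik_pos, ← hαk]
  exact hlt k (by omega) hkn

theorem stmt7 (n : ℕ) (hn : 2 ≤ n) (ρ α : ℕ → ℝ)
    (hρ : ∀ i, 1 ≤ i → i ≤ n → 0 < ρ i)
    (hα0pos : 0 < α 0) (hα0le : α 0 ≤ 1)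
    (hrec : ∀ k, 1 ≤ k → k ≤ n → α k = min (α (k - 1) * ρ k) 1)
    (κ : ℕ) (hκle : κ ≤ n - 1) (hκ1 : α κ = 1)
    (hκmax : ∀ k, k ≤ n - 1 → α k = 1 → k ≤ κ) :
    ∀ i, κ + 1 ≤ i → i ≤ n - 1 →
      barAlpha ρ α n κ i = α i / α (kmin ρ n κ i) ∧ α i < barAlpha ρ α n κ i :=
  stmt7_general n ρ α hρ hrec κ hκ1 hκmax
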